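/- Let X be an infinite-dimensional real Banach space and let (A_n) be an approximation scheme in X such that dens_i = E(S(X), A_i) > 0 for every i ∈ ℕ. Then for every sequence (ε_i) of positive real numbers converging to 0 there exists x ∈ X with x ∉ ⋃_i A_i such that 0 < E(x, A_i) ≤ ε_i for every i ∈ ℕ. -/
import Mathlib

open Metric Filter

/-- `(A n)` together with the map `K` is an approximation scheme in `X`. -/
structure IsApproximationScheme {X : Type*} [NormedAddCommGroup X] [NormedSpace ℝ X]
    (A : ℕ → Set X) (K : ℕ → ℕ) : Prop where
  subset_succ : ∀ n, A n ⊆ A (n + 1)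
  ne_succ : ∀ n, A n ≠ A (n + 1)
  le_K : ∀ n, n ≤ K n
  add_mem : ∀ n, ∀ x ∈ A n, ∀ y ∈ A n, x + y ∈ A (K n)
  smul_mem : ∀ n (c : ℝ), ∀ x ∈ A n, c • x ∈ A n
  dense_union : Dense (⋃ n, A n)

/-- `(X, (A n))` satisfies Shapiro's Theorem: for every nonincreasing positive sequence
`ε` converging to `0` there is `x` with `E(x, A n) ≠ O(ε n)`. -/
def SatisfiesShapiro {X : Type*} [NormedAddCommGroup X] (A : ℕ → Set X) : Prop :=
  ∀ ε : ℕ → ℝ, (∀ n, 0 < ε n) → Antitone ε → Tendsto ε atTop (nhds 0) →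
    ∃ x : X, ¬ ∃ M : ℝ, ∀ n, infDist x (A n) ≤ M * ε n

/-- `E(B, A) = sup_{b ∈ B} E(b, A)`. -/
noncomputable def setApproxError {X : Type*} [NormedAddCommGroup X] (B A : Set X) : ℝ :=
  ⨆ b : B, infDist (b : X) A

/-- `dens_n`-style quantity: `E(S(X), A) = sup_{‖x‖ = 1} E(x, A)`. -/
noncomputable def sphDist {X : Type*} [NormedAddCommGroup X] (A : Set X) : ℝ :=
  ⨆ x : {x : X // ‖x‖ = 1}, infDist (x : X) A

namespace Stmt19Aux

variable {X : Type*} [NormedAddCommGroup X] [NormedSpace ℝ X]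
variable {A : ℕ → Set X} {K : ℕ → ℕ}

omit [NormedAddCommGroup X] [NormedSpace ℝ X] in
lemma monoA' (hA : ∀ n, A n ⊆ A (n + 1)) {n m : ℕ} (h : n ≤ m) : A n ⊆ A m := by
  induction h with
  | refl => exact fun x hx => hx
  | step _ ih => exact fun x hx => hA _ (ih hx)

lemma monoA (hA : IsApproximationScheme A K) {n m : ℕ} (h : n ≤ m) : A n ⊆ A m :=
  monoA' hA.subset_succ h

omit [NormedSpace ℝ X] in
lemma far_unit {m : ℕ} (hd : 0 < sphDist (A m)) : ∃ u : X, 0 < infDist u (A m) := by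
  by_contra h
  push_neg at h
  have : sphDist (A m) ≤ 0 := Real.iSup_nonpos fun x => h x
  exact absurd hd (not_lt.2 this)

omit [NormedSpace ℝ X] in
lemma nonempty_A0 (hd : 0 < sphDist (A 0)) : (A 0).Nonempty := by
  rcases Set.eq_empty_or_nonempty (A 0) with h | h
  · exact absurd (Real.iSup_nonpos (fun x => by simp [h])) (not_le.2 hd)
  · exact h

lemma zero_mem (hA : IsApproximationScheme A K) (h0 : (A 0).Nonempty) (n : ℕ) :
    (0 : X) ∈ A n := by
  obtain ⟨a, ha⟩ := h0
  have := hA.smul_mem n (0 : ℝ) a (monoA hA (Nat.zero_le n) ha)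
  rwa [zero_smul] at this

lemma far_member (hA : IsApproximationScheme A K) {m : ℕ} (hd : 0 < sphDist (A m)) :
    ∃ P : ℕ, ∃ y : X, y ∈ A P ∧ 0 < infDist y (A m) := by
  obtain ⟨u, hu⟩ := far_unit hd
  obtain ⟨y, hy, hdy⟩ := hA.dense_union.exists_dist_lt u hu
  obtain ⟨_, ⟨P, rfl⟩, hyP⟩ := hy
  refine ⟨P, y, hyP, ?_⟩
  have h1 : infDist u (A m) ≤ infDist y (A m) + dist u y := infDist_le_infDist_add_dist
  linarith

lemma smul_infDist_pos (hA : IsApproximationScheme A K) {m : ℕ} (h0 : (0 : X) ∈ A m)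
    {y : X} (hy : 0 < infDist y (A m)) {c : ℝ} (hc : c ≠ 0) :
    0 < infDist (c • y) (A m) := by
  have hne : (A m).Nonempty := ⟨0, h0⟩
  have hyc : y ∉ closure (A m) := fun h =>
    hy.ne' ((mem_closure_iff_infDist_zero hne).1 h)
  have hnotc : c • y ∉ closure (A m) := by
    intro h
    have h2 : c⁻¹ • (c • y) ∈ closure (A m) :=
      map_mem_closure (continuous_const_smul c⁻¹) h (fun a ha => hA.smul_mem m c⁻¹ a ha)
    rw [inv_smul_smul₀ hc] at h2
    exact hyc h2
  rcases (infDist_nonneg : (0:ℝ) ≤ infDist (c • y) (A m)).lt_or_eq with h | h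
  · exact h
  · exact absurd ((mem_closure_iff_infDist_zero hne).2 h.symm) hnotc

omit [NormedSpace ℝ X] in
lemma tail_est {f : ℕ → X} {x : X} (hx : Tendsto f atTop (nhds x)) {c : ℝ} (hc : 0 ≤ c)
    (j : ℕ) (h : ∀ k, j ≤ k → dist (f k) (f (k + 1)) ≤ (2⁻¹ : ℝ) ^ (k + 1) * c) :
    dist (f j) x ≤ (2⁻¹ : ℝ) ^ j * c := by
  have key : ∀ n, dist (f j) (f (j + n)) ≤ ((2⁻¹:ℝ) ^ j - (2⁻¹:ℝ) ^ (j + n)) * c := by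
    intro n
    induction n with
    | zero => simp
    | succ n ih =>
      have hs : (2⁻¹:ℝ) ^ (j + (n+1)) = (2⁻¹:ℝ) ^ (j + n) * 2⁻¹ := pow_succ _ _
      calc dist (f j) (f (j + (n + 1)))
          ≤ dist (f j) (f (j + n)) + dist (f (j + n)) (f (j + n + 1)) := dist_triangle _ _ _
        _ ≤ ((2⁻¹:ℝ) ^ j - (2⁻¹:ℝ) ^ (j + n)) * c + (2⁻¹:ℝ) ^ (j + n + 1) * c :=
            add_le_add ih (h _ (by omega))
        _ = ((2⁻¹:ℝ) ^ j - (2⁻¹:ℝ) ^ (j + (n+1))) * c := by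
            rw [hs, pow_succ]; ring
  have h1 : Tendsto (fun n => j + n) atTop atTop :=
    tendsto_atTop_mono (fun n => Nat.le_add_left n j) tendsto_id
  have h2 : Tendsto (fun n => dist (f j) (f (j + n))) atTop (nhds (dist (f j) x)) :=
    tendsto_const_nhds.dist (hx.comp h1)
  refine le_of_tendsto h2 (Eventually.of_forall fun n => (key n).trans ?_)
  have hp : (0:ℝ) ≤ (2⁻¹:ℝ) ^ (j + n) := by positivity
  nlinarith

lemma step_ex (hA : IsApproximationScheme A K) (hd : ∀ i, 0 < sphDist (A i))
    (h0 : ∀ n, (0 : X) ∈ A n) (δ : ℕ → ℝ) (hδ : ∀ n, 0 < δ n)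
    (j : ℕ) (p : ℕ × X × ℝ) (hp : p.2.1 ∈ A p.1 ∧ 0 < p.2.2) :
    ∃ q : ℕ × X × ℝ, (q.2.1 ∈ A q.1 ∧ 0 < q.2.2) ∧
      p.1 ≤ q.1 ∧ j + 1 ≤ q.1 ∧
      ‖q.2.1 - p.2.1‖ ≤ (2⁻¹:ℝ) ^ (j+1) * δ q.1 ∧
      ‖q.2.1 - p.2.1‖ ≤ (2⁻¹:ℝ) ^ (j+1) * p.2.2 ∧
      q.2.2 ≤ p.2.2 ∧ q.2.2 ≤ infDist (q.2.1 - p.2.1) (A (K p.1)) := by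
  obtain ⟨M, s, r⟩ := p
  obtain ⟨hs, hr⟩ := hp
  simp only at hs hr ⊢
  obtain ⟨P, y, hyP, hypos⟩ := far_member hA (hd (K M))
  have hy0 : y ≠ 0 := by
    rintro rfl
    rw [infDist_zero_of_mem (h0 _)] at hypos
    exact lt_irrefl _ hypos
  set M' := max (K (max P M)) (j + 1) with hM'def
  have hMM' : M ≤ M' :=
    le_trans (le_trans (le_max_right P M) (hA.le_K _)) (le_max_left _ _)
  have hjM' : j + 1 ≤ M' := le_max_right _ _
  set μ : ℝ := (2⁻¹:ℝ) ^ (j+1) * min (δ M') r / ‖y‖ with hμdef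
  have hμpos : 0 < μ :=
    div_pos (mul_pos (pow_pos (by norm_num) _) (lt_min (hδ M') hr)) (norm_pos_iff.2 hy0)
  have hnorm : ‖s + μ • y - s‖ = (2⁻¹:ℝ) ^ (j+1) * min (δ M') r := by
    rw [add_sub_cancel_left, norm_smul, Real.norm_of_nonneg hμpos.le, hμdef,
      div_mul_cancel₀ _ (norm_ne_zero_iff.2 hy0)]
  have htpos : 0 < infDist (μ • y) (A (K M)) :=
    smul_infDist_pos hA (h0 _) hypos hμpos.ne'
  refine ⟨(M', s + μ • y, min r (infDist (μ • y) (A (K M)))), ⟨?_, ?_⟩, hMM', hjM', ?_, ?_, ?_, ?_⟩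
  · have h1 : s ∈ A (max P M) := monoA hA (le_max_right _ _) hs
    have h2 : μ • y ∈ A (max P M) := hA.smul_mem _ μ y (monoA hA (le_max_left _ _) hyP)
    exact monoA hA (le_max_left _ _) (hA.add_mem _ s h1 (μ • y) h2)
  · exact lt_min hr htpos
  · rw [hnorm]
    exact mul_le_mul_of_nonneg_left (min_le_left _ _) (by positivity)
  · rw [hnorm]
    exact mul_le_mul_of_nonneg_left (min_le_right _ _) (by positivity)
  · exact min_le_left _ _
  · rw [show s + μ • y - s = μ • y from add_sub_cancel_left s _]
    exact min_le_right _ _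

end Stmt19Aux

theorem stmt19 {X : Type*} [NormedAddCommGroup X] [NormedSpace ℝ X] [CompleteSpace X]
    (hX : ¬ FiniteDimensional ℝ X) (A : ℕ → Set X) (K : ℕ → ℕ)
    (hA : IsApproximationScheme A K)
    (hdens : ∀ i : ℕ, 0 < sphDist (A i))
    (ε : ℕ → ℝ) (hpos : ∀ i, 0 < ε i) (hlim : Tendsto ε atTop (nhds 0)) :
    ∃ x : X, x ∉ (⋃ i, A i) ∧
      ∀ i : ℕ, 0 < infDist x (A i) ∧ infDist x (A i) ≤ ε i := by
  classical
  have h0A : ∀ n, (0 : X) ∈ A n :=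
    Stmt19Aux.zero_mem hA (Stmt19Aux.nonempty_A0 (hdens 0))
  -- the running minimum of ε
  set δ : ℕ → ℝ := fun n => (Finset.range (n + 1)).inf' Finset.nonempty_range_add_one ε
    with hδdef
  have hδpos : ∀ n, 0 < δ n := fun n => (Finset.lt_inf'_iff _).2 fun i _ => hpos i
  have hδε : ∀ n, δ n ≤ ε n := fun n => Finset.inf'_le ε (Finset.self_mem_range_succ n)
  have hδanti : ∀ {a b : ℕ}, a ≤ b → δ b ≤ δ a := by
    intro a b hab
    exact Finset.inf'_mono ε (Finset.range_subset_range.2 (by omega)) Finset.nonempty_range_add_one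
  -- the recursively chosen sequence of states
  let T := {p : ℕ × X × ℝ // p.2.1 ∈ A p.1 ∧ 0 < p.2.2}
  let nxt : ℕ → T → T := fun j p =>
    ⟨Classical.choose (Stmt19Aux.step_ex hA hdens h0A δ hδpos j p.1 p.2),
     (Classical.choose_spec (Stmt19Aux.step_ex hA hdens h0A δ hδpos j p.1 p.2)).1⟩
  let f : ℕ → T := fun n => Nat.rec ⟨(0, 0, 1), h0A 0, one_pos⟩ nxt n
  let M : ℕ → ℕ := fun j => (f j).1.1
  let s : ℕ → X := fun j => (f j).1.2.1
  let r : ℕ → ℝ := fun j => (f j).1.2.2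
  have hM0 : M 0 = 0 := rfl
  have hs0 : s 0 = 0 := rfl
  have hr0 : r 0 = 1 := rfl
  have hmem : ∀ j, s j ∈ A (M j) := fun j => (f j).2.1
  have hrpos : ∀ j, 0 < r j := fun j => (f j).2.2
  have hspec : ∀ j, M j ≤ M (j + 1) ∧ j + 1 ≤ M (j + 1) ∧
      ‖s (j + 1) - s j‖ ≤ (2⁻¹:ℝ) ^ (j + 1) * δ (M (j + 1)) ∧
      ‖s (j + 1) - s j‖ ≤ (2⁻¹:ℝ) ^ (j + 1) * r j ∧
      r (j + 1) ≤ r j ∧ r (j + 1) ≤ infDist (s (j + 1) - s j) (A (K (M j))) := fun j =>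
    (Classical.choose_spec (Stmt19Aux.step_ex hA hdens h0A δ hδpos j (f j).1 (f j).2)).2
  have hranti : Antitone r := antitone_nat_of_succ_le fun n => (hspec n).2.2.2.2.1
  have hMmono : Monotone M := monotone_nat_of_le_succ fun n => (hspec n).1
  have hMj : ∀ j, j ≤ M j := by
    intro j
    cases j with
    | zero => exact Nat.zero_le _
    | succ n => exact (hspec n).2.1
  have hdstep : ∀ k, dist (s k) (s (k + 1)) = ‖s (k + 1) - s k‖ := fun k => by
    rw [dist_eq_norm, norm_sub_rev]
  -- convergence
  have hcauchy : CauchySeq s := by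
    apply cauchySeq_of_le_geometric 2⁻¹ 2⁻¹ (by norm_num)
    intro n
    rw [hdstep n]
    calc ‖s (n + 1) - s n‖ ≤ (2⁻¹:ℝ) ^ (n + 1) * r n := (hspec n).2.2.2.1
      _ ≤ (2⁻¹:ℝ) ^ (n + 1) * 1 := by
          have := hranti (Nat.zero_le n)
          rw [hr0] at this
          exact mul_le_mul_of_nonneg_left this (by positivity)
      _ = 2⁻¹ * 2⁻¹ ^ n := by rw [pow_succ]; ring
  obtain ⟨x, hx⟩ := cauchySeq_tendsto_of_complete hcauchy
  -- upper tail estimate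
  have hU : ∀ j, dist (s j) x ≤ (2⁻¹:ℝ) ^ j * δ (M (j + 1)) := by
    intro j
    refine Stmt19Aux.tail_est hx (hδpos _).le j (fun k hk => ?_)
    rw [hdstep k]
    refine le_trans (hspec k).2.2.1 (mul_le_mul_of_nonneg_left ?_ (by positivity))
    exact hδanti (hMmono (Nat.succ_le_succ hk))
  -- lower tail estimate
  have hL : ∀ j, dist (s (j + 1)) x ≤ (2⁻¹:ℝ) ^ (j + 1) * r (j + 1) := by
    intro j
    refine Stmt19Aux.tail_est hx (hrpos (j + 1)).le (j + 1) (fun k hk => ?_)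
    rw [hdstep k]
    exact le_trans (hspec k).2.2.2.1 (mul_le_mul_of_nonneg_left (hranti hk) (by positivity))
  -- lower bound on the distance of x to A (M j)
  have hlow : ∀ j, r (j + 1) / 2 ≤ infDist x (A (M j)) := by
    intro j
    by_contra hcon
    push_neg at hcon
    obtain ⟨b, hb, hdb⟩ := (infDist_lt_iff ⟨0, h0A _⟩).1 hcon
    have hbs : b - s j ∈ A (K (M j)) := by
      have hneg : (-1 : ℝ) • s j ∈ A (M j) := hA.smul_mem _ _ _ (hmem j)
      have := hA.add_mem _ b hb _ hneg
      rwa [neg_one_smul, ← sub_eq_add_neg] at this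
    have h1 : r (j + 1) ≤ dist (s (j + 1)) b := by
      have h2 : infDist (s (j + 1) - s j) (A (K (M j))) ≤ dist (s (j + 1) - s j) (b - s j) :=
        infDist_le_dist_of_mem hbs
      have h3 : dist (s (j + 1) - s j) (b - s j) = dist (s (j + 1)) b := by
        rw [dist_eq_norm, dist_eq_norm]
        congr 1
        abel
      rw [h3] at h2
      exact le_trans (hspec j).2.2.2.2.2 h2
    have hpow : (2⁻¹:ℝ) ^ (j + 1) ≤ 2⁻¹ := by
      calc (2⁻¹:ℝ) ^ (j + 1) ≤ (2⁻¹:ℝ) ^ 1 :=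
            pow_le_pow_of_le_one (by norm_num) (by norm_num) (Nat.succ_le_succ (Nat.zero_le j))
        _ = 2⁻¹ := pow_one _
    have h4 : dist (s (j + 1)) x ≤ r (j + 1) / 2 := by
      have h5 := hL j
      have h6 : (2⁻¹:ℝ) ^ (j + 1) * r (j + 1) ≤ 2⁻¹ * r (j + 1) :=
        mul_le_mul_of_nonneg_right hpow (hrpos (j + 1)).le
      linarith
    have h7 : dist (s (j + 1)) b ≤ dist (s (j + 1)) x + dist x b := dist_triangle _ _ _
    linarith
  have hposx : ∀ i, 0 < infDist x (A i) := by
    intro i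
    have h1 : infDist x (A (M i)) ≤ infDist x (A i) :=
      infDist_le_infDist_of_subset (Stmt19Aux.monoA hA (hMj i)) ⟨0, h0A i⟩
    have h2 : (0:ℝ) < r (i + 1) / 2 := by
      have := hrpos (i + 1); linarith
    exact lt_of_lt_of_le (lt_of_lt_of_le h2 (hlow i)) h1
  have hub : ∀ i, infDist x (A i) ≤ ε i := by
    intro i
    set j := Nat.findGreatest (fun j => M j ≤ i) i with hjdef
    have hPj : M j ≤ i := by
      refine Nat.findGreatest_spec (P := fun k => M k ≤ i) (Nat.zero_le i) ?_
      show M 0 ≤ i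
      rw [hM0]
      exact Nat.zero_le i
    have hji : j ≤ i := Nat.findGreatest_le i
    have hnext : i < M (j + 1) := by
      by_cases hcase : j + 1 ≤ i
      · exact not_le.1 (Nat.findGreatest_is_greatest (P := fun k => M k ≤ i)
          (lt_of_le_of_lt (le_of_eq hjdef.symm) (Nat.lt_succ_self j)) hcase)
      · have hji' : j = i := le_antisymm hji (by omega)
        rw [hji']
        exact lt_of_lt_of_le (Nat.lt_succ_self i) (hMj (i + 1))
    have h1 : infDist x (A i) ≤ dist x (s j) :=
      infDist_le_dist_of_mem (Stmt19Aux.monoA hA hPj (hmem j))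
    have h3 : dist (s j) x ≤ (2⁻¹:ℝ) ^ j * δ (M (j + 1)) := hU j
    have h4 : (2⁻¹:ℝ) ^ j ≤ 1 := pow_le_one₀ (by norm_num) (by norm_num)
    have h5 : δ (M (j + 1)) ≤ δ i := hδanti (le_of_lt hnext)
    have h6 : (2⁻¹:ℝ) ^ j * δ (M (j + 1)) ≤ δ (M (j + 1)) := by
      have := (hδpos (M (j + 1))).le
      nlinarith
    calc infDist x (A i) ≤ dist x (s j) := h1
      _ = dist (s j) x := dist_comm _ _
      _ ≤ (2⁻¹:ℝ) ^ j * δ (M (j + 1)) := h3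
      _ ≤ δ (M (j + 1)) := h6
      _ ≤ δ i := h5
      _ ≤ ε i := hδε i
  refine ⟨x, ?_, fun i => ⟨hposx i, hub i⟩⟩
  intro hmemU
  obtain ⟨_, ⟨i, rfl⟩, hxi⟩ := hmemU
  exact (hposx i).ne' (infDist_zero_of_mem hxi)
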